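/- Let I ⊆ ℝ be an interval with at least two points and f : I → I continuous with f^n = id for some even n ≥ 2. Then f^2 = id. -/

import Mathlib

/-!
A continuous injective self-map of an interval is strictly monotone or strictly antitone, so in
either case `f ∘ f` is strictly increasing. A strictly increasing map has no periodic points
other than its fixed points (an orbit that moves up once keeps moving up), and every point is a
periodic point of `f ∘ f` of period `n / 2`.
-/

open Function

theorem StrictMono.isFixedPt_of_isPeriodicPt {α : Type*} [LinearOrder α] {g : α → α}
    (hg : StrictMono g) {n : ℕ} (hn : 0 < n) {x : α} (hx : IsPeriodicPt g n x) :
    IsFixedPt g x := by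
  have h := Commute.id_right.iterate_pos_eq_iff_map_eq hg.monotone strictMono_id hn (x := x)
  rw [iterate_id] at h
  exact h.1 hx

theorem StrictMono.eq_id_of_iterate_eq_id {α : Type*} [LinearOrder α] {g : α → α}
    (hg : StrictMono g) {n : ℕ} (hn : n ≠ 0) (h : g^[n] = id) : g = id :=
  funext fun x ↦ hg.isFixedPt_of_isPeriodicPt (Nat.pos_of_ne_zero hn) (congrFun h x)

theorem Function.injective_of_iterate_eq_id {α : Type*} {g : α → α} {n : ℕ} (hn : n ≠ 0)
    (h : g^[n] = id) : Injective g := by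
  obtain ⟨m, rfl⟩ := Nat.exists_eq_succ_of_ne_zero hn
  rw [iterate_succ] at h
  exact Injective.of_comp (h ▸ injective_id)

theorem Continuous.strictMono_iterate_two_of_injective {α : Type*}
    [ConditionallyCompleteLinearOrder α] [TopologicalSpace α] [OrderTopology α]
    [DenselyOrdered α] {g : α → α} (hg : Continuous g) (hinj : Injective g) :
    StrictMono g^[2] := by
  rcases hg.strictMono_of_inj hinj with hmono | hanti
  · exact hmono.iterate 2
  · exact hanti.comp hanti

theorem Continuous.iterate_two_eq_id_of_iterate_eq_id {α : Type*}
    [ConditionallyCompleteLinearOrder α] [TopologicalSpace α] [OrderTopology α]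
    [DenselyOrdered α] {g : α → α} (hg : Continuous g) {n : ℕ} (hn : Even n) (hn0 : n ≠ 0)
    (h : g^[n] = id) : g^[2] = id := by
  obtain ⟨k, rfl⟩ := hn.two_dvd
  refine (hg.strictMono_iterate_two_of_injective (injective_of_iterate_eq_id hn0 h)
    ).eq_id_of_iterate_eq_id (n := k) (right_ne_zero_of_mul hn0) ?_
  rwa [← iterate_mul]

theorem stmt_7_general (I : Set ℝ) (hI : Convex ℝ I)
    (f : ℝ → ℝ) (hf : ContinuousOn f I) (hmap : Set.MapsTo f I I)
    (n : ℕ) (hn : Even n) (hn2 : 2 ≤ n)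
    (hper : ∀ x ∈ I, f^[n] x = x) :
    ∀ x ∈ I, f (f x) = x := by
  intro x hx
  have : Inhabited I := ⟨⟨x, hx⟩⟩
  have := hI.ordConnected
  have hper' : (hmap.restrict f I I)^[n] = id :=
    funext fun y ↦ Subtype.ext <| by rw [hmap.iterate_restrict]; exact hper y y.2
  have hinv := congrFun ((hf.mapsToRestrict hmap).iterate_two_eq_id_of_iterate_eq_id hn
    (by omega) hper') ⟨x, hx⟩
  simpa [← hmap.iterate_restrict] using congrArg Subtype.val hinv

theorem stmt_7 (I : Set ℝ) (hI : Convex ℝ I) (hI2 : ∃ a ∈ I, ∃ b ∈ I, a ≠ b)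
    (f : ℝ → ℝ) (hf : ContinuousOn f I) (hmap : Set.MapsTo f I I)
    (n : ℕ) (hn : Even n) (hn2 : 2 ≤ n)
    (hper : ∀ x ∈ I, f^[n] x = x) :
    ∀ x ∈ I, f (f x) = x :=
  stmt_7_general I hI f hf hmap n hn hn2 hper
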